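/- arXiv:2508.05901 — 3 statements merged into one kernel-verified Lean document; each statement's English description precedes it below -/
import Mathlib

section
/- Let (S, 𝒮) be a measurable space, n ≥ 3, and let X₁,…,Xₙ be i.i.d. S-valued random variables with law μ. Let A : Sⁿ → 2^S and A' : Sⁿ⁻¹ → 2^S be symmetric measurable set-valued maps, and define δ' := E[μ(A(X₁,…,Xₙ) Δ A'(X₁,…,Xₙ₋₁))]. For 1 ≤ i ≤ n set Kᵢ := 1{Xᵢ ∈ A'(X₁,…,Xᵢ₋₁,Xᵢ₊₁,…,Xₙ)}, Lᵢ := E(Kᵢ | X₁,…,Xᵢ₋₁,Xᵢ₊₁,…,Xₙ) and I' := Σᵢ₌₁ⁿ Lᵢ. Then E|I'/n − μ(A(X₁,…,Xₙ))| ≤ 2δ'. -/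
/-!
Conditionally on the other `n - 1` variables `X₋ᵢ`, the variable `Xᵢ` still has law `μ`, so
`Lᵢ = μ(A'(X₋ᵢ))` almost surely and hence `|Lᵢ - μ(A(X))| ≤ μ(A(X) Δ A'(X₋ᵢ))`.
Since `X` is exchangeable and `A` is symmetric, the right-hand side has expectation `δ'` for
every `i`; averaging over `i` gives `E|I'/n - μ(A(X))| ≤ δ'`.
-/

open MeasureTheory ProbabilityTheory

noncomputable section

/-- The map `Fin (n-1) → Fin n` that skips the index `i`. -/
def skipIdx {n : ℕ} (i : Fin n) (j : Fin (n - 1)) : Fin n :=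
  if (j : ℕ) < (i : ℕ) then Fin.castLE (Nat.sub_le n 1) j
  else ⟨(j : ℕ) + 1, by have := j.isLt; omega⟩

theorem skipIdx_eq_succAbove {m : ℕ} (i : Fin (m + 1)) (j : Fin m) :
    skipIdx i j = i.succAbove j := by
  simp only [skipIdx, Fin.succAbove, Fin.lt_def, Fin.val_castSucc]
  split_ifs <;> rfl

theorem Fin.exists_perm_succAbove_last {m : ℕ} (i : Fin (m + 1)) :
    ∃ σ : Equiv.Perm (Fin (m + 1)), ∀ j, σ ((Fin.last m).succAbove j) = i.succAbove j :=
  ⟨(finSuccEquiv' (Fin.last m)).trans (finSuccEquiv' i).symm, fun j => by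
    simp only [Equiv.trans_apply, finSuccEquiv'_succAbove, finSuccEquiv'_symm_some]⟩

theorem integrable_measureReal {S Ω : Type*} [MeasurableSpace S] [MeasurableSpace Ω]
    {P : Measure Ω} [IsFiniteMeasure P] {μ : Measure S} [IsZeroOrProbabilityMeasure μ]
    {B : Ω → Set S} (hB : Measurable fun ω => μ (B ω)) :
    Integrable (fun ω => μ.real (B ω)) P :=
  .of_bound hB.ennreal_toReal.aestronglyMeasurable 1
    (.of_forall fun _ => (abs_of_nonneg measureReal_nonneg).trans_le measureReal_le_one)

theorem integral_abs_sub_measureReal_le_integral_measureReal_symmDiff {S Ω : Type*}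
    [MeasurableSpace S] [MeasurableSpace Ω] {P : Measure Ω} {μ : Measure S} [IsFiniteMeasure μ]
    {f : Ω → ℝ} {B C : Ω → Set S} (hf : f =ᵐ[P] fun ω => μ.real (C ω))
    (hB : ∀ ω, MeasurableSet (B ω)) (hC : ∀ ω, MeasurableSet (C ω))
    (hint : Integrable (fun ω => μ.real (symmDiff (B ω) (C ω))) P) :
    ∫ ω, |f ω - μ.real (B ω)| ∂P ≤ ∫ ω, μ.real (symmDiff (B ω) (C ω)) ∂P := by
  refine integral_mono_of_nonneg (.of_forall fun _ => abs_nonneg _) hint ?_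
  filter_upwards [hf] with ω hω
  rw [hω, abs_sub_comm]
  exact abs_measureReal_sub_le_measureReal_symmDiff (hB ω).nullMeasurableSet
    (hC ω).nullMeasurableSet

theorem integral_abs_sum_div_card_sub_le {ι Ω : Type*} [Fintype ι] [Nonempty ι]
    [MeasurableSpace Ω] {P : Measure Ω} {f : ι → Ω → ℝ} {g : Ω → ℝ}
    (hf : ∀ i, Integrable (f i) P) (hg : Integrable g P) {c : ℝ}
    (hc : ∀ i, ∫ ω, |f i ω - g ω| ∂P ≤ c) :
    ∫ ω, |(∑ i, f i ω) / Fintype.card ι - g ω| ∂P ≤ c := by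
  have hN : (0 : ℝ) < Fintype.card ι := Nat.cast_pos.2 Fintype.card_pos
  have hpt : ∀ ω, |(∑ i, f i ω) / Fintype.card ι - g ω|
      ≤ (∑ i, |f i ω - g ω|) / Fintype.card ι := fun ω => by
    have hsum : (∑ i, f i ω) / Fintype.card ι - g ω
        = (∑ i, (f i ω - g ω)) / Fintype.card ι := by
      rw [Finset.sum_sub_distrib, Finset.sum_const, Finset.card_univ, nsmul_eq_mul]
      field_simp
    rw [hsum, abs_div, abs_of_pos hN]
    gcongr
    exact Finset.abs_sum_le_sum_abs _ _
  have hint : ∀ i ∈ Finset.univ, Integrable (fun ω => |f i ω - g ω|) P :=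
    fun i _ => ((hf i).sub hg).abs
  calc ∫ ω, |(∑ i, f i ω) / Fintype.card ι - g ω| ∂P
      ≤ ∫ ω, (∑ i, |f i ω - g ω|) / Fintype.card ι ∂P :=
        integral_mono_of_nonneg (.of_forall fun _ => abs_nonneg _)
          ((integrable_finsetSum _ hint).div_const _) (.of_forall hpt)
    _ = (∑ i, ∫ ω, |f i ω - g ω| ∂P) / Fintype.card ι := by
        rw [integral_div, integral_finsetSum _ hint]
    _ ≤ (∑ _i : ι, c) / Fintype.card ι := by gcongr with i; exact hc i
    _ = c := by
        rw [Finset.sum_const, Finset.card_univ, nsmul_eq_mul, mul_div_cancel_left₀ _ hN.ne']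

namespace ProbabilityTheory

theorem condExp_comp_prodMk_ae_eq_integral {α β Ω : Type*} [MeasurableSpace α]
    [mβ : MeasurableSpace β] {mΩ : MeasurableSpace Ω} {P : Measure Ω} [IsFiniteMeasure P]
    {f : Ω → α} {g : Ω → β} (hf : Measurable f) (hg : Measurable g) (hgf : IndepFun g f P)
    {F : β × α → ℝ} (hF : StronglyMeasurable F)
    (hF_int : Integrable F ((P.map g).prod (P.map f))) :
    P[fun ω => F (g ω, f ω) | mβ.comap g] =ᵐ[P] fun ω => ∫ x, F (g ω, x) ∂P.map f := by
  have hmap : P.map (fun ω => (g ω, f ω)) = (P.map g).prod (P.map f) :=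
    (indepFun_iff_map_prod_eq_prod_map_map hg.aemeasurable hf.aemeasurable).1 hgf
  have hgf_meas : Measurable fun ω => (g ω, f ω) := hg.prodMk hf
  have hG_int : Integrable (fun y => ∫ x, F (y, x) ∂P.map f) (P.map g) :=
    hF_int.integral_prod_left
  have hG_meas : StronglyMeasurable fun y => ∫ x, F (y, x) ∂P.map f :=
    hF.integral_prod_right'
  rw [← hmap] at hF_int
  refine (ae_eq_condExp_of_forall_setIntegral_eq hg.comap_le
    (hF_int.comp_measurable hgf_meas)
    (fun s _ _ => (hG_int.comp_measurable hg).integrableOn) ?_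
    (hG_meas.comp_measurable (comap_measurable g)).aestronglyMeasurable).symm
  rintro _ ⟨t, ht, rfl⟩ -
  calc ∫ ω in g ⁻¹' t, ∫ x, F (g ω, x) ∂P.map f ∂P
      = ∫ y in t, ∫ x, F (y, x) ∂P.map f ∂P.map g :=
        (setIntegral_map ht hG_meas.aestronglyMeasurable hg.aemeasurable).symm
    _ = ∫ z in t ×ˢ Set.univ, F z ∂P.map (fun ω => (g ω, f ω)) := by
        rw [hmap, setIntegral_prod _ (hmap ▸ hF_int).integrableOn, Measure.restrict_univ]
    _ = ∫ ω in g ⁻¹' t, F (g ω, f ω) ∂P := by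
        rw [setIntegral_map (ht.prod .univ) hF.aestronglyMeasurable hgf_meas.aemeasurable,
          Set.mk_preimage_prod, Set.preimage_univ, Set.inter_univ]

theorem condExp_indicator_section_ae_eq_measureReal {α β Ω : Type*} [MeasurableSpace α]
    [mβ : MeasurableSpace β] {mΩ : MeasurableSpace Ω} {P : Measure Ω} [IsFiniteMeasure P]
    {f : Ω → α} {g : Ω → β} (hf : Measurable f) (hg : Measurable g) (hgf : IndepFun g f P)
    {B : β → Set α} (hB : MeasurableSet {q : β × α | q.2 ∈ B q.1}) :
    P[fun ω => (B (g ω)).indicator (fun _ => (1 : ℝ)) (f ω) | mβ.comap g]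
      =ᵐ[P] fun ω => (P.map f).real (B (g ω)) := by
  refine (condExp_comp_prodMk_ae_eq_integral
    (F := fun q => (B q.1).indicator (fun _ => (1 : ℝ)) q.2) hf hg hgf ?_ ?_).trans
    (.of_forall fun ω => ?_)
  · exact (stronglyMeasurable_const (b := (1 : ℝ))).indicator hB
  · exact (integrable_const (1 : ℝ)).indicator hB
  · exact integral_indicator_one (hB.preimage measurable_prodMk_left)

section IID

variable {ι S Ω : Type*} [MeasurableSpace S] [MeasurableSpace Ω] {P : Measure Ω}
  {μ : Measure S} {X : ι → Ω → S}

theorem iIndepFun.map_fun_eq_pi [Fintype ι] (hX : ∀ i, Measurable (X i)) (h : iIndepFun X P)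
    (hlaw : ∀ i, P.map (X i) = μ) :
    P.map (fun ω i => X i ω) = Measure.pi fun _ => μ := by
  simp_rw [h.map_fun_eq_pi_map fun i => (hX i).aemeasurable, hlaw]

theorem iIndepFun.integral_comp_perm [Fintype ι] {E : Type*} [NormedAddCommGroup E]
    [NormedSpace ℝ E] (hX : ∀ i, Measurable (X i)) (h : iIndepFun X P)
    (hlaw : ∀ i, P.map (X i) = μ) (σ : Equiv.Perm ι) {G : (ι → S) → E}
    (hG : AEStronglyMeasurable G (Measure.pi fun _ => μ)) :
    ∫ ω, G (fun i => X (σ i) ω) ∂P = ∫ ω, G (fun i => X i ω) ∂P := by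
  have hXσ : P.map (fun ω i => X (σ i) ω) = Measure.pi fun _ => μ :=
    (h.precomp σ.injective).map_fun_eq_pi (fun i => hX (σ i)) fun i => hlaw (σ i)
  have hXπ := h.map_fun_eq_pi hX hlaw
  rw [← integral_map (measurable_pi_lambda _ fun i => hX (σ i)).aemeasurable (hXσ ▸ hG),
    hXσ, ← hXπ, integral_map (measurable_pi_lambda _ hX).aemeasurable (hXπ ▸ hG)]

theorem iIndepFun.indepFun_removeNth {m : ℕ} {X : Fin (m + 1) → Ω → S}
    (hX : ∀ i, Measurable (X i)) (h : iIndepFun X P) (i : Fin (m + 1)) :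
    IndepFun (fun ω => i.removeNth fun k => X k ω) (X i) P := by
  have := (h.indepFun_finset {i}ᶜ {i} (by simp) hX).comp
    (φ := fun v j => v ⟨i.succAbove j, by simp [Fin.succAbove_ne]⟩)
    (ψ := fun v => v ⟨i, by simp⟩) (_mγ' := ‹_›)
    (measurable_pi_lambda _ fun _ => measurable_pi_apply _) (measurable_pi_apply _)
  exact this

end IID

end ProbabilityTheory

section LeaveOneOut

variable {S Ω : Type*} [MeasurableSpace S] [MeasurableSpace Ω] {P : Measure Ω} {μ : Measure S}
  {m : ℕ} {X : Fin (m + 1) → Ω → S} {A : (Fin (m + 1) → S) → Set S} {A' : (Fin m → S) → Set S}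

theorem condExp_indicator_removeNth_ae_eq [IsFiniteMeasure P] (hX : ∀ i, Measurable (X i))
    (h : iIndepFun X P) (hlaw : ∀ i, P.map (X i) = μ)
    (hA' : MeasurableSet {q : (Fin m → S) × S | q.2 ∈ A' q.1}) (i : Fin (m + 1)) :
    P[fun ω => (A' (i.removeNth fun k => X k ω)).indicator (fun _ => (1 : ℝ)) (X i ω) |
        MeasurableSpace.comap (fun ω => i.removeNth fun k => X k ω) MeasurableSpace.pi]
      =ᵐ[P] fun ω => μ.real (A' (i.removeNth fun k => X k ω)) := by
  rw [← hlaw i]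
  exact condExp_indicator_section_ae_eq_measureReal (hX i)
    (measurable_pi_lambda _ fun _ => hX _) (h.indepFun_removeNth hX i) hA'

theorem measurable_measure_symmDiff_removeNth [SFinite μ]
    (hA : MeasurableSet {q : (Fin (m + 1) → S) × S | q.2 ∈ A q.1})
    (hA' : MeasurableSet {q : (Fin m → S) × S | q.2 ∈ A' q.1}) (i : Fin (m + 1)) :
    Measurable fun x => μ (symmDiff (A x) (A' (i.removeNth x))) :=
  measurable_measure_prodMk_left <| hA.symmDiff <| hA'.preimage <|
    (measurable_pi_lambda _ fun _ => measurable_pi_apply _).prodMap measurable_id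

theorem integral_measureReal_symmDiff_removeNth_eq_last [IsProbabilityMeasure μ]
    (hX : ∀ i, Measurable (X i)) (h : iIndepFun X P) (hlaw : ∀ i, P.map (X i) = μ)
    (hAsym : ∀ (σ : Equiv.Perm (Fin (m + 1))) x, A (x ∘ σ) = A x)
    (hA : MeasurableSet {q : (Fin (m + 1) → S) × S | q.2 ∈ A q.1})
    (hA' : MeasurableSet {q : (Fin m → S) × S | q.2 ∈ A' q.1}) (i : Fin (m + 1)) :
    ∫ ω, μ.real (symmDiff (A fun k => X k ω) (A' (i.removeNth fun k => X k ω))) ∂P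
      = ∫ ω, μ.real (symmDiff (A fun k => X k ω)
          (A' ((Fin.last m).removeNth fun k => X k ω))) ∂P := by
  obtain ⟨σ, hσ⟩ := Fin.exists_perm_succAbove_last i
  have hG : ∀ x, μ.real (symmDiff (A (x ∘ σ)) (A' ((Fin.last m).removeNth (x ∘ σ))))
      = μ.real (symmDiff (A x) (A' (i.removeNth x))) := fun x => by
    rw [hAsym]
    congr 3
    exact funext fun j => congrArg x (hσ j)
  calc _ = ∫ ω, μ.real (symmDiff (A fun k => X (σ k) ω)
        (A' ((Fin.last m).removeNth fun k => X (σ k) ω))) ∂P :=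
        integral_congr_ae (.of_forall fun ω => (hG _).symm)
    _ = _ := h.integral_comp_perm hX hlaw σ
        (measurable_measure_symmDiff_removeNth hA hA' _).ennreal_toReal.aestronglyMeasurable

theorem integral_abs_sub_measureReal_le_integral_symmDiff_last [IsFiniteMeasure P]
    [IsProbabilityMeasure μ] (hX : ∀ i, Measurable (X i)) (h : iIndepFun X P)
    (hlaw : ∀ i, P.map (X i) = μ) (hAsym : ∀ (σ : Equiv.Perm (Fin (m + 1))) x, A (x ∘ σ) = A x)
    (hA : MeasurableSet {q : (Fin (m + 1) → S) × S | q.2 ∈ A q.1})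
    (hA' : MeasurableSet {q : (Fin m → S) × S | q.2 ∈ A' q.1}) {f : Ω → ℝ} (i : Fin (m + 1))
    (hf : f =ᵐ[P] fun ω => μ.real (A' (i.removeNth fun k => X k ω))) :
    ∫ ω, |f ω - μ.real (A fun k => X k ω)| ∂P
      ≤ ∫ ω, μ.real (symmDiff (A fun k => X k ω)
          (A' ((Fin.last m).removeNth fun k => X k ω))) ∂P :=
  (integral_abs_sub_measureReal_le_integral_measureReal_symmDiff
    (B := fun ω => A fun k => X k ω) hf
    (fun _ => hA.preimage measurable_prodMk_left) (fun _ => hA'.preimage measurable_prodMk_left)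
    (integrable_measureReal ((measurable_measure_symmDiff_removeNth hA hA' i).comp
      (measurable_pi_lambda _ hX)))).trans_eq
    (integral_measureReal_symmDiff_removeNth_eq_last hX h hlaw hAsym hA hA' i)

end LeaveOneOut

theorem cascading_exclusion_bias_lemma_general
    {S : Type*} [MeasurableSpace S] {Ω : Type*} [MeasurableSpace Ω]
    (P : Measure Ω) [IsProbabilityMeasure P]
    (μ : Measure S) [IsProbabilityMeasure μ]
    (n : ℕ) (hn : 3 ≤ n)
    (X : Fin n → Ω → S)
    (hmeas : ∀ i, Measurable (X i))
    (hindep : iIndepFun X P)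
    (hlaw : ∀ i, Measure.map (X i) P = μ)
    (A : (Fin n → S) → Set S)
    (A' : (Fin (n - 1) → S) → Set S)
    (hAsym : ∀ (σ : Equiv.Perm (Fin n)) (x : Fin n → S), A (x ∘ σ) = A x)
    (hAmeas : MeasurableSet {q : (Fin n → S) × S | q.2 ∈ A q.1})
    (hA'meas : MeasurableSet {q : (Fin (n - 1) → S) × S | q.2 ∈ A' q.1})
    (δ' : ℝ)
    (hδ' : δ' = ∫ ω, (μ (symmDiff (A (fun j => X j ω))
        (A' (fun j => X (Fin.castLE (Nat.sub_le n 1) j) ω)))).toReal ∂P)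
    (K : Fin n → Ω → ℝ)
    (hK : ∀ i ω, K i ω =
      Set.indicator (A' (fun j => X (skipIdx i j) ω)) (fun _ => (1 : ℝ)) (X i ω))
    (L : Fin n → Ω → ℝ)
    (hL : ∀ i, L i =
      MeasureTheory.condExp
        (MeasurableSpace.comap (fun ω => fun j : Fin (n - 1) => X (skipIdx i j) ω)
          MeasurableSpace.pi) P (K i)) :
    ∫ ω, |(∑ i : Fin n, L i ω) / n - (μ (A (fun j => X j ω))).toReal| ∂P ≤ 2 * δ' := by
  obtain ⟨m, rfl⟩ : ∃ m, n = m + 1 := ⟨n - 1, by omega⟩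
  simp only [skipIdx_eq_succAbove] at hK hL
  have hL_eq : ∀ i, L i =ᵐ[P] fun ω => μ.real (A' (i.removeNth fun k => X k ω)) := fun i => by
    rw [hL i, funext (hK i)]
    exact condExp_indicator_removeNth_ae_eq hmeas hindep hlaw hA'meas i
  have hδ : δ' = ∫ ω, μ.real (symmDiff (A fun k => X k ω)
      (A' ((Fin.last m).removeNth fun k => X k ω))) ∂P := by
    have hlast : ∀ ω, (fun j => X (Fin.castLE (Nat.sub_le (m + 1) 1) j) ω)
        = (Fin.last m).removeNth fun k => X k ω := fun ω =>
      funext fun j => congrArg (X · ω) (Fin.succAbove_last_apply j).symm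
    simp only [hδ', hlast]
    rfl
  have hbound := integral_abs_sum_div_card_sub_le (fun i => (hL i).symm ▸ integrable_condExp)
    (integrable_measureReal ((measurable_measure_prodMk_left hAmeas).comp
      (measurable_pi_lambda _ hmeas)))
    fun i => (integral_abs_sub_measureReal_le_integral_symmDiff_last hmeas hindep hlaw hAsym
      hAmeas hA'meas i (hL_eq i)).trans_eq hδ.symm
  have hδ_nonneg : 0 ≤ δ' := hδ ▸ integral_nonneg fun _ => measureReal_nonneg
  rw [Fintype.card_fin] at hbound
  exact hbound.trans (by linarith)

/-- **Lemma A.2 of cascading exclusion.** With `Kᵢ` the leave-one-out indicators,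
`Lᵢ` their conditional expectations given the remaining variables and `I' = Σ Lᵢ`,
one has `E|I'/n − μ(A(X₁,…,Xₙ))| ≤ 2δ'`. -/
theorem cascading_exclusion_bias_lemma
    {S : Type*} [MeasurableSpace S] {Ω : Type*} [MeasurableSpace Ω]
    (P : Measure Ω) [IsProbabilityMeasure P]
    (μ : Measure S) [IsProbabilityMeasure μ]
    (n : ℕ) (hn : 3 ≤ n)
    (X : Fin n → Ω → S)
    (hmeas : ∀ i, Measurable (X i))
    (hindep : iIndepFun X P)
    (hlaw : ∀ i, Measure.map (X i) P = μ)
    (A : (Fin n → S) → Set S)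
    (A' : (Fin (n - 1) → S) → Set S)
    (hAsym : ∀ (σ : Equiv.Perm (Fin n)) (x : Fin n → S), A (x ∘ σ) = A x)
    (hA'sym : ∀ (σ : Equiv.Perm (Fin (n - 1))) (x : Fin (n - 1) → S), A' (x ∘ σ) = A' x)
    (hAmeas : MeasurableSet {q : (Fin n → S) × S | q.2 ∈ A q.1})
    (hA'meas : MeasurableSet {q : (Fin (n - 1) → S) × S | q.2 ∈ A' q.1})
    (δ' : ℝ)
    (hδ' : δ' = ∫ ω, (μ (symmDiff (A (fun j => X j ω))
        (A' (fun j => X (Fin.castLE (Nat.sub_le n 1) j) ω)))).toReal ∂P)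
    (K : Fin n → Ω → ℝ)
    (hK : ∀ i ω, K i ω =
      Set.indicator (A' (fun j => X (skipIdx i j) ω)) (fun _ => (1 : ℝ)) (X i ω))
    (L : Fin n → Ω → ℝ)
    (hL : ∀ i, L i =
      MeasureTheory.condExp
        (MeasurableSpace.comap (fun ω => fun j : Fin (n - 1) => X (skipIdx i j) ω)
          MeasurableSpace.pi) P (K i)) :
    ∫ ω, |(∑ i : Fin n, L i ω) / n - (μ (A (fun j => X j ω))).toReal| ∂P ≤ 2 * δ' :=
  cascading_exclusion_bias_lemma_general P μ n hn X hmeas hindep hlaw A A' hAsym hAmeas hA'meas δ'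
    hδ' K hK L hL

end
end

section
/- Let (S, ⪯) be a partially ordered set and let T ⊆ S be a finite up-set (i.e., ↑T = T). Let X₁,…,Xₙ (n ≥ 3) be i.i.d. uniform random points from T, let Nₙ := #{1 ≤ i ≤ n : Xⱼ ⪯ Xᵢ for some j ≠ i}, and define the estimator |T|̂ := n · |↑{X₁,…,Xₙ}| / Nₙ. Then E[ (Nₙ²/n) · (1 − |T|̂/|T|)² ] ≤ 8/e + 1/2. -/
/-!
Write `m = |T|`, `W` for the number of points of `T` above no sample and `M = n - Nₙ` for the
number of samples above no other sample. As `T` is an up-set, `|↑{X₁,…,Xₙ}| = m - W`, hence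
`Nₙ (1 - |T|̂/m) = n W / m - M` and the integrand is at most `(n W / m - M)² / n` (it is `0` when
`Nₙ = 0`, where the estimator divides by zero). The samples being i.i.d. uniform, the expectation is
an average over `Tⁿ`, and `∑ W²`, `∑ W M`, `∑ M²` count tuples through pairs `(p, q) ∈ T²`,
each fibre being a product set of size a power of `F(p, q) = |{x ∈ T : x ⋠ p, x ⋠ q}|`.
Grouping the terms of `{p, q}`: a comparable pair contributes at most `0`, an incomparable one at
most `n² F^(n-2) (1 - F/m)² ≤ 12 n m^(n-2) e⁻²` (from `s² e^(-(n-2)s) ≤ (2/((n-2)e))²`), the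
diagonal at most `n mⁿ e⁻¹` in total (from `x e⁻ˣ ≤ e⁻¹` at `x = n/m`), and the diagonal of
`∑ M²` at most `n mⁿ`. Finally `e⁻¹ + 12 e⁻² + 1 ≤ 8/e + 1/2` as `1/12 ≤ e⁻¹ ≤ 1/2`.
-/

open MeasureTheory ProbabilityTheory

noncomputable section

namespace UpperSetEstimator

open Finset Fintype Real
open scoped Classical

lemma one_sub_pow_le_exp_neg_mul {x : ℝ} (hx : x ≤ 1) (k : ℕ) :
    (1 - x) ^ k ≤ exp (-(k * x)) :=
  calc (1 - x) ^ k ≤ exp (-x) ^ k := pow_le_pow_left₀ (by linarith) (one_sub_le_exp_neg x) k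
    _ = exp (-(k * x)) := by rw [← exp_nat_mul]; ring_nf

lemma sq_mul_exp_neg_mul_le {c s : ℝ} (hc : 0 < c) (hs : 0 ≤ s) :
    s ^ 2 * exp (-(c * s)) ≤ 4 / c ^ 2 * exp (-1) ^ 2 := by
  calc s ^ 2 * exp (-(c * s)) = 4 / c ^ 2 * (c * s / 2 * exp (-(c * s / 2))) ^ 2 := by
        rw [mul_pow, ← exp_nat_mul]; field_simp; ring_nf
    _ ≤ 4 / c ^ 2 * exp (-1) ^ 2 := by
        gcongr; exact mul_exp_neg_le_exp_neg_one _

lemma incomparable_term_le {k : ℕ} (hk : 1 ≤ k) {m F : ℝ} (hm : 0 < m) (hF : 0 ≤ F)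
    (hFm : F ≤ m) :
    ((k + 2 : ℕ) / m) ^ 2 * F ^ (k + 2) - 2 * ((k + 2 : ℕ) ^ 2 / m) * F ^ (k + 1)
        + (k + 2 : ℕ) * ((k + 2 : ℕ) - 1) * F ^ k
      ≤ 12 * (k + 2 : ℕ) * m ^ k * exp (-1) ^ 2 := by
  set s := 1 - F / m
  have hs0 : 0 ≤ s := by have := (div_le_one hm).2 hFm; simp only [s]; linarith
  have hs1 : s ≤ 1 := by have := div_nonneg hF hm.le; simp only [s]; linarith
  have hFs : F = m * (1 - s) := by simp only [s]; field_simp; ring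
  push_cast
  calc ((k + 2) / m) ^ 2 * F ^ (k + 2) - 2 * ((k + 2) ^ 2 / m) * F ^ (k + 1)
        + (k + 2) * ((k + 2) - 1) * F ^ k
      = F ^ k * ((k + 2) ^ 2 * s ^ 2 - (k + 2)) := by
        rw [hFs]; field_simp; ring
    _ ≤ F ^ k * ((k + 2) ^ 2 * s ^ 2) := by gcongr; linarith
    _ ≤ m ^ k * exp (-(k * s)) * ((k + 2) ^ 2 * s ^ 2) := by
        gcongr
        rw [hFs, mul_pow]
        gcongr
        exact one_sub_pow_le_exp_neg_mul hs1 k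
    _ = (k + 2) ^ 2 * m ^ k * (s ^ 2 * exp (-(k * s))) := by ring
    _ ≤ (k + 2) ^ 2 * m ^ k * (4 / k ^ 2 * exp (-1) ^ 2) := by
        exact mul_le_mul_of_nonneg_left (sq_mul_exp_neg_mul_le (by positivity) hs0)
          (by positivity)
    _ ≤ 12 * (k + 2) * m ^ k * exp (-1) ^ 2 := by
        have h : (k + 2) ^ 2 * (4 / k ^ 2) ≤ 12 * ((k : ℝ) + 2) := by
          have hk' : (1 : ℝ) ≤ k := by exact_mod_cast hk
          rw [mul_div_assoc', div_le_iff₀ (by positivity)]; nlinarith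
        calc (k + 2) ^ 2 * m ^ k * (4 / k ^ 2 * exp (-1) ^ 2)
            = (k + 2) ^ 2 * (4 / k ^ 2) * (m ^ k * exp (-1) ^ 2) := by ring
          _ ≤ 12 * (k + 2) * (m ^ k * exp (-1) ^ 2) := by gcongr
          _ = _ := by ring

lemma comparable_term_nonpos (k : ℕ) {ν m F : ℝ} (hm : 0 < m) (hF : 0 ≤ F) (hFm : F ≤ m) :
    (ν / m) ^ 2 * F ^ (k + 1) - ν ^ 2 / m * F ^ k ≤ 0 := by
  have : (ν / m) ^ 2 * F ^ (k + 1) - ν ^ 2 / m * F ^ k = ν ^ 2 / m * F ^ k * (F / m - 1) := by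
    field_simp; ring
  rw [this]
  exact mul_nonpos_of_nonneg_of_nonpos (by positivity)
    (by linarith [(div_le_one hm).2 hFm])

lemma diagonal_term_le {m : ℝ} (hm : 1 ≤ m) (n : ℕ) :
    m * ((n / m) ^ 2 * (m - 1) ^ n) ≤ n * m ^ n * exp (-1) := by
  have hm0 : 0 < m := by linarith
  calc m * ((n / m) ^ 2 * (m - 1) ^ n) = n * m ^ n * (n / m * (1 - 1 / m) ^ n) := by
        rw [show (m - 1) ^ n = m ^ n * (1 - 1 / m) ^ n by
          rw [← mul_pow, mul_one_sub, mul_one_div_cancel hm0.ne']]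
        field_simp
    _ ≤ n * m ^ n * (n / m * exp (-(n * (1 / m)))) := by
        gcongr
        exact one_sub_pow_le_exp_neg_mul ((div_le_one hm0).2 hm) n
    _ ≤ n * m ^ n * exp (-1) := by
        gcongr
        simpa [div_eq_mul_inv] using mul_exp_neg_le_exp_neg_one (n / m)

lemma exp_neg_one_add_le : exp (-1) + 12 * exp (-1) ^ 2 + 1 ≤ 8 / exp 1 + 1 / 2 := by
  have hlo : 1 / 12 ≤ exp (-1) := by
    rw [exp_neg, one_div]
    exact inv_anti₀ (exp_pos 1) (exp_one_lt_d9.le.trans (by norm_num))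
  have hhi := exp_neg_one_lt_half
  rw [div_eq_mul_inv, ← exp_neg]
  nlinarith

section Sampling

variable {ι S Ω : Type*} [MeasurableSpace S] [MeasurableSingletonClass S] [MeasurableSpace Ω]
  {P : Measure Ω} {T : Finset S}

lemma measure_preimage_singleton_of_map_eq_uniformOn {X : Ω → S} (hX : Measurable X)
    (hlaw : P.map X = uniformOn (T : Set S)) {a : S} (ha : a ∈ T) :
    P (X ⁻¹' {a}) = (#T : ENNReal)⁻¹ := by
  rw [← Measure.map_apply hX (measurableSet_singleton a), hlaw, ← coe_singleton,
    uniformOn_apply_finset, inter_singleton_of_mem ha, card_singleton, Nat.cast_one, one_div]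

lemma ae_mem_of_map_eq_uniformOn {X : Ω → S} (hX : Measurable X)
    (hlaw : P.map X = uniformOn (T : Set S)) : ∀ᵐ ω ∂P, X ω ∈ T := by
  have h : P (X ⁻¹' (T : Set S)ᶜ) = 0 := by
    rw [← Measure.map_apply hX T.measurableSet.compl, hlaw,
      uniformOn_eq_zero_iff T.finite_toSet, Set.inter_compl_self]
  exact measure_eq_zero_iff_ae_notMem.1 h |>.mono fun ω hω => by simpa using hω

variable [Fintype ι] {X : ι → Ω → S}

lemma measureReal_iInter_preimage_singleton (hmeas : ∀ i, Measurable (X i))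
    (hindep : iIndepFun X P) (hlaw : ∀ i, P.map (X i) = uniformOn (T : Set S)) {t : ι → S}
    (ht : ∀ i, t i ∈ T) :
    P.real (⋂ i, X i ⁻¹' {t i}) = (#T : ℝ)⁻¹ ^ Fintype.card ι := by
  have h := hindep.measure_inter_preimage_eq_mul univ (sets := fun i => {t i})
    fun i _ => measurableSet_singleton (t i)
  simp only [mem_univ, Set.iInter_true] at h
  rw [measureReal_def, h, prod_congr rfl fun i _ =>
      measure_preimage_singleton_of_map_eq_uniformOn (hmeas i) (hlaw i) (ht i),
    prod_const, card_univ, ENNReal.toReal_pow, ENNReal.toReal_inv, ENNReal.toReal_natCast]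

lemma integral_comp_eq_sum_div_card_pow [DecidableEq ι] (hmeas : ∀ i, Measurable (X i))
    (hindep : iIndepFun X P) (hlaw : ∀ i, P.map (X i) = uniformOn (T : Set S))
    (F : (ι → S) → ℝ) :
    ∫ ω, F (fun i => X i ω) ∂P
      = (∑ t ∈ piFinset fun _ => T, F t) / #T ^ Fintype.card ι := by
  have := hindep.isProbabilityMeasure
  have hfiber : ∀ t : ι → S, MeasurableSet (⋂ i, X i ⁻¹' {t i}) := fun t =>
    MeasurableSet.iInter fun i => hmeas i (measurableSet_singleton (t i))
  have hae : ∀ᵐ ω ∂P, ∀ i, X i ω ∈ T :=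
    ae_all_iff.2 fun i => ae_mem_of_map_eq_uniformOn (hmeas i) (hlaw i)
  have hsplit : (fun ω => F (fun i => X i ω)) =ᵐ[P] fun ω =>
      ∑ t ∈ piFinset fun _ => T, (⋂ i, X i ⁻¹' {t i}).indicator (fun _ => F t) ω := by
    filter_upwards [hae] with ω hω
    rw [sum_eq_single_of_mem (fun i => X i ω) (Fintype.mem_piFinset.2 hω)]
    · exact (Set.indicator_of_mem (show ω ∈ ⋂ i, X i ⁻¹' {X i ω} by simp)
        fun _ => F fun i => X i ω).symm
    · intro t _ ht
      refine Set.indicator_of_notMem (fun h => ht (funext fun i => ?_).symm) _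
      simpa using Set.mem_iInter.1 h i
  rw [integral_congr_ae hsplit,
    integral_finsetSum _ fun t _ => (integrable_const (F t)).indicator (hfiber t)]
  simp only [integral_indicator_const _ (hfiber _), smul_eq_mul]
  rw [Finset.sum_congr rfl fun t ht => by
      rw [measureReal_iInter_preimage_singleton hmeas hindep hlaw (Fintype.mem_piFinset.1 ht)],
    ← mul_sum, inv_pow, inv_mul_eq_div]

end Sampling

lemma card_piFinset_update_singleton {α : Type*} (s : Finset α) {n : ℕ} (i : Fin n) (a : α) :
    #(piFinset (Function.update (fun _ => s) i {a})) = #s ^ (n - 1) := by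
  rw [card_piFinset]
  simp only [Function.apply_update (fun _ => Finset.card)]
  rw [prod_update_of_mem (mem_univ i), card_singleton, one_mul, prod_const,
    card_sdiff_of_subset (subset_univ _), card_singleton, card_univ, Fintype.card_fin]

lemma card_piFinset_update_singleton_pair {α : Type*} (s : Finset α) {n : ℕ} {i j : Fin n}
    (hij : i ≠ j) (a b : α) :
    #(piFinset (Function.update (Function.update (fun _ => s) i {a}) j {b})) = #s ^ (n - 2) := by
  rw [card_piFinset]
  simp only [Function.apply_update (fun _ => Finset.card)]
  rw [prod_update_of_mem (mem_univ j), card_singleton, one_mul,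
    prod_update_of_mem (by simpa using hij), card_singleton, one_mul, prod_const,
    card_sdiff_of_subset (by simpa using hij), card_sdiff_of_subset (subset_univ _)]
  simp only [card_singleton, card_univ, Fintype.card_fin]
  rw [Nat.sub_sub]

lemma sum_card_mul_card {ι α β : Type*} [DecidableEq α] [DecidableEq β] (s : Finset ι)
    {X : Finset α} {Y : Finset β} (A : ι → Finset α) (B : ι → Finset β)
    (hA : ∀ i ∈ s, A i ⊆ X) (hB : ∀ i ∈ s, B i ⊆ Y) :
    ∑ i ∈ s, #(A i) * #(B i) = ∑ x ∈ X, ∑ y ∈ Y, #{i ∈ s | x ∈ A i ∧ y ∈ B i} := by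
  have hA' : ∀ i ∈ s, #(A i) = ∑ x ∈ X, if x ∈ A i then 1 else 0 := fun i hi => by
    rw [← card_filter, filter_mem_eq_inter, inter_eq_right.2 (hA i hi)]
  have hB' : ∀ i ∈ s, #(B i) = ∑ y ∈ Y, if y ∈ B i then 1 else 0 := fun i hi => by
    rw [← card_filter, filter_mem_eq_inter, inter_eq_right.2 (hB i hi)]
  have hprod : ∀ i ∈ s, #(A i) * #(B i)
      = ∑ x ∈ X, ∑ y ∈ Y, if x ∈ A i ∧ y ∈ B i then 1 else 0 := fun i hi => by
    rw [hA' i hi, hB' i hi, Finset.sum_mul_sum]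
    simp only [ite_zero_mul_ite_zero, mul_one]
  rw [sum_congr rfl hprod, sum_comm]
  refine sum_congr rfl fun x _ => ?_
  rw [sum_comm]
  simp only [card_filter]

variable {S : Type*} [PartialOrder S] {T : Finset S} {n : ℕ}

variable (T) in
def uncovered (t : Fin n → S) : Finset S := {y ∈ T | ∀ i, ¬ t i ≤ y}

def minimalIndices (t : Fin n → S) : Finset (Fin n) := {i | ∀ j, j ≠ i → ¬ t j ≤ t i}

variable (T) in
def avoiding (p q : S) : Finset S := {x ∈ T | ¬ x ≤ p ∧ ¬ x ≤ q}

lemma avoiding_comm (p q : S) : avoiding T p q = avoiding T q p := by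
  simp only [avoiding, and_comm]

lemma card_avoiding_le (p q : S) : #(avoiding T p q) ≤ #T := card_filter_le _ _

lemma card_avoiding_self_lt {p : S} (hp : p ∈ T) : #(avoiding T p p) < #T :=
  card_lt_card (filter_ssubset.2 ⟨p, hp, by simp⟩)

lemma card_filter_uncovered_uncovered {p q : S} (hp : p ∈ T) (hq : q ∈ T) :
    #{t ∈ piFinset fun _ : Fin n => T | p ∈ uncovered T t ∧ q ∈ uncovered T t}
      = #(avoiding T p q) ^ n := by
  have : {t ∈ piFinset fun _ : Fin n => T | p ∈ uncovered T t ∧ q ∈ uncovered T t}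
      = piFinset fun _ => avoiding T p q := by
    ext t; simp only [uncovered, mem_filter, mem_piFinset, avoiding]; grind
  rw [this, card_piFinset_const]

lemma card_fiber_uncovered_minimal {p a : S} (hp : p ∈ T) (ha : a ∈ T) (hap : ¬ a ≤ p)
    (i : Fin n) :
    #{t ∈ piFinset fun _ : Fin n => T | (p ∈ uncovered T t ∧ i ∈ minimalIndices t) ∧ t i = a}
      = #(avoiding T p a) ^ (n - 1) := by
  have : {t ∈ piFinset fun _ : Fin n => T | (p ∈ uncovered T t ∧ i ∈ minimalIndices t) ∧ t i = a}
      = piFinset (Function.update (fun _ => avoiding T p a) i {a}) := by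
    ext t
    simp only [uncovered, mem_filter, minimalIndices, mem_univ, true_and, mem_piFinset, avoiding,
      Function.update_apply]
    grind
  rw [this, card_piFinset_update_singleton]

lemma card_fiber_minimal {a : S} (ha : a ∈ T) (i : Fin n) :
    #{t ∈ piFinset fun _ : Fin n => T | i ∈ minimalIndices t ∧ t i = a}
      = #(avoiding T a a) ^ (n - 1) := by
  have : {t ∈ piFinset fun _ : Fin n => T | i ∈ minimalIndices t ∧ t i = a}
      = piFinset (Function.update (fun _ => avoiding T a a) i {a}) := by
    ext t
    simp only [minimalIndices, mem_filter, mem_univ, true_and, mem_piFinset, avoiding, and_self,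
      Function.update_apply]
    grind
  rw [this, card_piFinset_update_singleton]

lemma card_fiber_minimal_minimal {a b : S} (ha : a ∈ T) (hb : b ∈ T) (hab : ¬ a ≤ b)
    (hba : ¬ b ≤ a) {i j : Fin n} (hij : i ≠ j) :
    #{t ∈ piFinset fun _ : Fin n => T |
        (i ∈ minimalIndices t ∧ j ∈ minimalIndices t) ∧ t i = a ∧ t j = b}
      = #(avoiding T a b) ^ (n - 2) := by
  have : {t ∈ piFinset fun _ : Fin n => T |
        (i ∈ minimalIndices t ∧ j ∈ minimalIndices t) ∧ t i = a ∧ t j = b}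
      = piFinset (Function.update (Function.update (fun _ => avoiding T a b) i {a}) j {b}) := by
    ext t
    simp only [minimalIndices, mem_filter, mem_univ, true_and, mem_piFinset, avoiding,
      Function.update_apply]
    grind
  rw [this, card_piFinset_update_singleton_pair _ hij]

lemma sum_card_uncovered_sq :
    ∑ t ∈ piFinset (fun _ : Fin n => T), #(uncovered T t) ^ 2
      = ∑ p ∈ T, ∑ q ∈ T, #(avoiding T p q) ^ n := by
  simp only [sq]
  rw [sum_card_mul_card _ (uncovered T) (uncovered T) (fun _ _ => filter_subset _ _)
    (fun _ _ => filter_subset _ _)]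
  exact sum_congr rfl fun p hp => sum_congr rfl fun q hq => card_filter_uncovered_uncovered hp hq

lemma card_filter_uncovered_minimal {p : S} (hp : p ∈ T) (i : Fin n) :
    #{t ∈ piFinset fun _ : Fin n => T | p ∈ uncovered T t ∧ i ∈ minimalIndices t}
      = ∑ a ∈ T with ¬ a ≤ p, #(avoiding T p a) ^ (n - 1) := by
  rw [card_eq_sum_card_fiberwise (f := fun t => t i) (t := {a ∈ T | ¬ a ≤ p})]
  · refine sum_congr rfl fun a ha => ?_
    rw [mem_filter] at ha
    rw [filter_filter, card_fiber_uncovered_minimal hp ha.1 ha.2]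
  · intro t ht
    simp only [coe_filter, mem_filter, Fintype.mem_piFinset, uncovered] at ht ⊢
    exact ⟨ht.1 i, ht.2.1.2 i⟩

lemma card_filter_minimal (i : Fin n) :
    #{t ∈ piFinset fun _ : Fin n => T | i ∈ minimalIndices t}
      = ∑ a ∈ T, #(avoiding T a a) ^ (n - 1) := by
  rw [card_eq_sum_card_fiberwise (f := fun t => t i) (t := T)]
  · refine sum_congr rfl fun a ha => ?_
    rw [filter_filter, card_fiber_minimal ha]
  · intro t ht
    simp only [coe_filter, Fintype.mem_piFinset] at ht
    exact ht.1 i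

lemma card_filter_minimal_minimal {i j : Fin n} (hij : i ≠ j) :
    #{t ∈ piFinset fun _ : Fin n => T | i ∈ minimalIndices t ∧ j ∈ minimalIndices t}
      = ∑ a ∈ T, ∑ b ∈ T with ¬ a ≤ b ∧ ¬ b ≤ a, #(avoiding T a b) ^ (n - 2) := by
  rw [card_eq_sum_card_fiberwise (f := fun t => t i) (t := T)]
  · refine sum_congr rfl fun a ha => ?_
    rw [card_eq_sum_card_fiberwise (f := fun t => t j) (t := {b ∈ T | ¬ a ≤ b ∧ ¬ b ≤ a})]
    · refine sum_congr rfl fun b hb => ?_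
      rw [mem_filter] at hb
      rw [filter_filter, filter_filter, card_fiber_minimal_minimal ha hb.1 hb.2.1 hb.2.2 hij]
    · intro t ht
      simp only [coe_filter, mem_filter, Fintype.mem_piFinset, minimalIndices, mem_univ,
        true_and] at ht ⊢
      obtain ⟨⟨hT, hi, hj⟩, rfl⟩ := ht
      exact ⟨hT j, hj i hij, hi j hij.symm⟩
  · intro t ht
    simp only [coe_filter, Fintype.mem_piFinset] at ht
    exact ht.1 i

lemma sum_card_uncovered_mul_card_minimalIndices :
    ∑ t ∈ piFinset (fun _ : Fin n => T), #(uncovered T t) * #(minimalIndices t)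
      = n * ∑ p ∈ T, ∑ a ∈ T with ¬ a ≤ p, #(avoiding T p a) ^ (n - 1) := by
  rw [sum_card_mul_card _ (uncovered T) minimalIndices (fun _ _ => filter_subset _ _)
    (fun _ _ => subset_univ _), mul_sum]
  refine sum_congr rfl fun p hp => ?_
  rw [sum_congr rfl fun i _ => card_filter_uncovered_minimal hp i, sum_const, card_univ,
    Fintype.card_fin, smul_eq_mul]

lemma sum_card_minimalIndices_sq :
    ∑ t ∈ piFinset (fun _ : Fin n => T), #(minimalIndices t) ^ 2
      = n * ∑ a ∈ T, #(avoiding T a a) ^ (n - 1)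
        + n * (n - 1) * ∑ a ∈ T, ∑ b ∈ T with ¬ a ≤ b ∧ ¬ b ≤ a, #(avoiding T a b) ^ (n - 2) := by
  simp only [sq]
  rw [sum_card_mul_card _ minimalIndices minimalIndices (fun _ _ => subset_univ _)
    (fun _ _ => subset_univ _)]
  have hrow : ∀ i : Fin n,
      ∑ j, #{t ∈ piFinset fun _ : Fin n => T | i ∈ minimalIndices t ∧ j ∈ minimalIndices t}
        = ∑ a ∈ T, #(avoiding T a a) ^ (n - 1)
          + (n - 1) * ∑ a ∈ T, ∑ b ∈ T with ¬ a ≤ b ∧ ¬ b ≤ a, #(avoiding T a b) ^ (n - 2) := by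
    intro i
    rw [← add_sum_erase _ _ (mem_univ i)]
    simp only [and_self]
    rw [card_filter_minimal, Finset.sum_congr rfl fun j hj =>
        card_filter_minimal_minimal (T := T) (ne_of_mem_erase hj).symm, sum_const,
      card_erase_of_mem (mem_univ i), card_univ, Fintype.card_fin, smul_eq_mul]
  rw [sum_congr rfl fun i _ => hrow i, sum_const, card_univ, Fintype.card_fin, smul_eq_mul]
  ring

-- The terms of `∑ₜ (n W / m - M)²` indexed by `(p, q)`, with the `W M` part split evenly
-- between `(p, q)` and `(q, p)`, so that a comparable pair can be bounded together with its swap.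
variable (T n) in
def pairTerm (p q : S) : ℝ :=
  (n / #T) ^ 2 * #(avoiding T p q) ^ n
    - n ^ 2 / #T * ((if ¬ q ≤ p then (#(avoiding T p q) : ℝ) ^ (n - 1) else 0)
      + (if ¬ p ≤ q then (#(avoiding T p q) : ℝ) ^ (n - 1) else 0))
    + n * (n - 1) * (if ¬ p ≤ q ∧ ¬ q ≤ p then (#(avoiding T p q) : ℝ) ^ (n - 2) else 0)

lemma sum_sq_eq_sum_pairTerm :
    ∑ t ∈ piFinset (fun _ : Fin n => T),
        ((n / #T) * #(uncovered T t) - #(minimalIndices t) : ℝ) ^ 2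
      = ∑ p ∈ T, ∑ q ∈ T, pairTerm T n p q + n * ∑ a ∈ T, (#(avoiding T a a) : ℝ) ^ (n - 1) := by
  have hW : ∑ t ∈ piFinset (fun _ : Fin n => T), (#(uncovered T t) : ℝ) ^ 2
      = ∑ p ∈ T, ∑ q ∈ T, (#(avoiding T p q) : ℝ) ^ n := by
    exact_mod_cast sum_card_uncovered_sq
  have hWM : ∑ t ∈ piFinset (fun _ : Fin n => T), (#(uncovered T t) * #(minimalIndices t) : ℝ)
      = n * ∑ p ∈ T, ∑ q ∈ T, if ¬ q ≤ p then (#(avoiding T p q) : ℝ) ^ (n - 1) else 0 := by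
    simp only [← sum_filter]
    exact_mod_cast sum_card_uncovered_mul_card_minimalIndices
  have hWM' : ∑ p ∈ T, ∑ q ∈ T, (if ¬ p ≤ q then (#(avoiding T p q) : ℝ) ^ (n - 1) else 0)
      = ∑ p ∈ T, ∑ q ∈ T, if ¬ q ≤ p then (#(avoiding T p q) : ℝ) ^ (n - 1) else 0 := by
    rw [sum_comm]
    simp only [avoiding_comm (T := T)]
  have hM : ∑ t ∈ piFinset (fun _ : Fin n => T), (#(minimalIndices t) : ℝ) ^ 2
      = n * ∑ a ∈ T, (#(avoiding T a a) : ℝ) ^ (n - 1) + n * (n - 1) * ∑ p ∈ T, ∑ q ∈ T,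
          if ¬ p ≤ q ∧ ¬ q ≤ p then (#(avoiding T p q) : ℝ) ^ (n - 2) else 0 := by
    simp only [← sum_filter]
    rcases Nat.eq_zero_or_pos n with rfl | hn
    · simp [minimalIndices]
    · have h := congrArg (Nat.cast : ℕ → ℝ) (sum_card_minimalIndices_sq (T := T) (n := n))
      push_cast [Nat.cast_sub hn] at h
      exact h
  simp only [pairTerm, sum_add_distrib, sum_sub_distrib, ← mul_sum, mul_add, hWM']
  simp only [sub_sq, mul_pow, sum_add_distrib, sum_sub_distrib, ← mul_sum]
  simp only [mul_assoc, ← mul_sum]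
  rw [hW, hWM, hM]
  ring

lemma pairTerm_le (hn : 3 ≤ n) {p q : S} (hp : p ∈ T) :
    pairTerm T n p q ≤ (if p = q then (n / #T) ^ 2 * (#T - 1 : ℝ) ^ n else 0)
      + 12 * n * (#T : ℝ) ^ (n - 2) * exp (-1) ^ 2 := by
  have hm : (0 : ℝ) < #T := by exact_mod_cast card_pos.2 ⟨p, hp⟩
  have hF : (#(avoiding T p q) : ℝ) ≤ #T := by exact_mod_cast card_avoiding_le p q
  obtain ⟨k, rfl⟩ : ∃ k, n = k + 2 := ⟨n - 2, by omega⟩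
  have hB : 0 ≤ 12 * (k + 2 : ℕ) * (#T : ℝ) ^ k * exp (-1) ^ 2 := by positivity
  by_cases hpq : p = q
  · subst hpq
    have hF' : (#(avoiding T p p) : ℝ) ≤ #T - 1 := by
      have := card_avoiding_self_lt hp
      rw [le_sub_iff_add_le]; exact_mod_cast this
    simp only [pairTerm, le_refl, not_true_eq_false, if_false, and_false, add_zero, mul_zero,
      sub_zero, if_true, Nat.add_sub_cancel]
    exact le_add_of_le_of_nonneg (by gcongr) hB
  simp only [pairTerm, if_neg hpq, zero_add, Nat.add_sub_cancel, Nat.add_succ_sub_one]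
  have hcomp : ((k + 2 : ℕ) / (#T : ℝ)) ^ 2 * #(avoiding T p q) ^ (k + 2)
      - (k + 2 : ℕ) ^ 2 / (#T : ℝ) * #(avoiding T p q) ^ (k + 1) ≤ 0 :=
    comparable_term_nonpos (k + 1) hm (Nat.cast_nonneg _) hF
  by_cases hpq' : p ≤ q <;> by_cases hqp : q ≤ p
  · exact absurd (le_antisymm hpq' hqp) hpq
  · simp only [hpq', hqp, not_true_eq_false, not_false_eq_true, if_true, if_false, and_true,
      mul_zero, add_zero]
    linarith
  · simp only [hpq', hqp, not_true_eq_false, not_false_eq_true, if_true, if_false, and_false,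
      mul_zero, add_zero, zero_add]
    linarith
  · simp only [hpq', hqp, not_false_eq_true, if_true, and_self]
    calc _ = ((k + 2 : ℕ) / (#T : ℝ)) ^ 2 * #(avoiding T p q) ^ (k + 2)
          - 2 * ((k + 2 : ℕ) ^ 2 / (#T : ℝ)) * #(avoiding T p q) ^ (k + 1)
          + (k + 2 : ℕ) * ((k + 2 : ℕ) - 1) * #(avoiding T p q) ^ k := by ring
      _ ≤ _ := incomparable_term_le (by omega) hm (Nat.cast_nonneg _) hF

lemma sum_pairTerm_le (hn : 3 ≤ n) :
    ∑ p ∈ T, ∑ q ∈ T, pairTerm T n p q ≤ n * (#T : ℝ) ^ n * (exp (-1) + 12 * exp (-1) ^ 2) := by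
  rcases T.eq_empty_or_nonempty with rfl | hT
  · simp only [Finset.sum_empty]; positivity
  have hm : (1 : ℝ) ≤ #T := by exact_mod_cast card_pos.2 hT
  have hpow : (#T : ℝ) * (#T * (#T : ℝ) ^ (n - 2)) = (#T : ℝ) ^ n := by
    rw [← mul_assoc, ← sq, ← pow_add]; congr 1; omega
  calc ∑ p ∈ T, ∑ q ∈ T, pairTerm T n p q
      ≤ ∑ p ∈ T, ∑ q ∈ T, ((if p = q then (n / #T) ^ 2 * (#T - 1 : ℝ) ^ n else 0)
          + 12 * n * (#T : ℝ) ^ (n - 2) * exp (-1) ^ 2) :=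
        sum_le_sum fun p hp => sum_le_sum fun q hq => pairTerm_le hn hp
    _ = #T * ((n / #T) ^ 2 * (#T - 1 : ℝ) ^ n)
          + #T * (#T * (#T : ℝ) ^ (n - 2)) * (12 * n * exp (-1) ^ 2) := by
        simp only [sum_add_distrib, Finset.sum_ite_eq, sum_const, nsmul_eq_mul]
        rw [Finset.sum_congr rfl fun p hp => if_pos hp, sum_const, nsmul_eq_mul]
        ring
    _ ≤ n * (#T : ℝ) ^ n * exp (-1) + (#T : ℝ) ^ n * (12 * n * exp (-1) ^ 2) := by
        rw [hpow]; exact add_le_add (diagonal_term_le hm n) le_rfl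
    _ = n * (#T : ℝ) ^ n * (exp (-1) + 12 * exp (-1) ^ 2) := by ring

lemma sum_sq_le (hn : 3 ≤ n) :
    ∑ t ∈ piFinset (fun _ : Fin n => T),
        ((n / #T) * #(uncovered T t) - #(minimalIndices t) : ℝ) ^ 2
      ≤ n * (#T : ℝ) ^ n * (8 / exp 1 + 1 / 2) := by
  have hdiag : ∑ a ∈ T, (#(avoiding T a a) : ℝ) ^ (n - 1) ≤ (#T : ℝ) ^ n :=
    calc ∑ a ∈ T, (#(avoiding T a a) : ℝ) ^ (n - 1) ≤ ∑ _a ∈ T, (#T : ℝ) ^ (n - 1) := by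
          refine sum_le_sum fun a _ => pow_le_pow_left₀ (Nat.cast_nonneg _) ?_ _
          exact_mod_cast card_avoiding_le a a
      _ = (#T : ℝ) ^ n := by
          rw [sum_const, nsmul_eq_mul, ← pow_succ']; congr 1; omega
  rw [sum_sq_eq_sum_pairTerm]
  calc _ ≤ n * (#T : ℝ) ^ n * (exp (-1) + 12 * exp (-1) ^ 2) + n * (#T : ℝ) ^ n := by
        gcongr
        exact sum_pairTerm_le hn
    _ = n * (#T : ℝ) ^ n * (exp (-1) + 12 * exp (-1) ^ 2 + 1) := by ring
    _ ≤ n * (#T : ℝ) ^ n * (8 / exp 1 + 1 / 2) :=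
        mul_le_mul_of_nonneg_left exp_neg_one_add_le (by positivity)

lemma sq_div_mul_one_sub_div_sq_le {ν m N U : ℝ} (hν : 0 ≤ ν) (hm : m ≠ 0) :
    N ^ 2 / ν * (1 - ν * U / N / m) ^ 2 ≤ (N - ν * U / m) ^ 2 / ν := by
  rcases eq_or_ne N 0 with rfl | hN
  · simp only [ne_eq, OfNat.ofNat_ne_zero, not_false_eq_true, zero_pow, zero_div, zero_mul]
    positivity
  · apply le_of_eq
    field_simp

def nonminimalCount (t : Fin n → S) : ℕ := {i | ∃ j, j ≠ i ∧ t j ≤ t i}.ncard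

variable (T) in
def estimatorError (t : Fin n → S) : ℝ :=
  (nonminimalCount t ^ 2 / n)
    * (1 - n * ({y | ∃ i, t i ≤ y}.ncard : ℝ) / nonminimalCount t / #T) ^ 2

lemma nonminimalCount_eq (t : Fin n → S) :
    (nonminimalCount t : ℝ) = n - #(minimalIndices t) := by
  have h := card_filter_add_card_filter_not (s := univ) fun i => ∃ j, j ≠ i ∧ t j ≤ t i
  rw [card_univ, Fintype.card_fin] at h
  have hM : minimalIndices t = ({i | ¬ ∃ j, j ≠ i ∧ t j ≤ t i} : Finset (Fin n)) := by
    simp only [minimalIndices, not_exists, not_and]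
  rw [nonminimalCount, ← coe_filter_univ, Set.ncard_coe_finset, hM, eq_sub_iff_add_eq]
  exact_mod_cast h

lemma ncard_covered_eq (hT : IsUpperSet (T : Set S)) {t : Fin n → S}
    (ht : t ∈ piFinset fun _ => T) :
    ({y | ∃ i, t i ≤ y}.ncard : ℝ) = #T - #(uncovered T t) := by
  have h := card_filter_add_card_filter_not (s := T) fun y => ∃ i, t i ≤ y
  have hcov : {y | ∃ i, t i ≤ y} = ({y ∈ T | ∃ i, t i ≤ y} : Finset S) := by
    ext y
    simp only [Set.mem_ofPred_eq, coe_filter, iff_and_self]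
    exact fun ⟨i, hi⟩ => hT hi (Fintype.mem_piFinset.1 ht i)
  have hunc : uncovered T t = {y ∈ T | ¬ ∃ i, t i ≤ y} := by
    simp only [uncovered, not_exists]
  rw [hcov, Set.ncard_coe_finset, hunc, eq_sub_iff_add_eq]
  exact_mod_cast h

lemma estimatorError_le (hT : IsUpperSet (T : Set S)) (hn : 0 < n) {t : Fin n → S}
    (ht : t ∈ piFinset fun _ => T) :
    estimatorError T t ≤ ((n / #T) * #(uncovered T t) - #(minimalIndices t) : ℝ) ^ 2 / n := by
  have hm : (#T : ℝ) ≠ 0 := by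
    exact_mod_cast (card_pos.2 ⟨t ⟨0, hn⟩, Fintype.mem_piFinset.1 ht _⟩).ne'
  calc estimatorError T t
      ≤ (nonminimalCount t - n * ({y | ∃ i, t i ≤ y}.ncard : ℝ) / #T) ^ 2 / n :=
        sq_div_mul_one_sub_div_sq_le (Nat.cast_nonneg n) hm
    _ = _ := by
        rw [nonminimalCount_eq, ncard_covered_eq hT ht]
        field_simp
        ring

lemma sum_estimatorError_le (hT : IsUpperSet (T : Set S)) (hn : 3 ≤ n) :
    ∑ t ∈ piFinset (fun _ : Fin n => T), estimatorError T t
      ≤ (8 / exp 1 + 1 / 2) * #T ^ n := by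
  have hn' : (0 : ℝ) < n := by exact_mod_cast (by omega : 0 < n)
  calc ∑ t ∈ piFinset (fun _ : Fin n => T), estimatorError T t
      ≤ ∑ t ∈ piFinset (fun _ : Fin n => T),
          ((n / #T) * #(uncovered T t) - #(minimalIndices t) : ℝ) ^ 2 / n :=
        sum_le_sum fun t ht => estimatorError_le hT (by omega) ht
    _ ≤ n * (#T : ℝ) ^ n * (8 / exp 1 + 1 / 2) / n := by
        rw [← sum_div]; gcongr; exact sum_sq_le hn
    _ = (8 / exp 1 + 1 / 2) * #T ^ n := by field_simp

end UpperSetEstimator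

theorem upper_set_size_estimator_general
    {S : Type*} [PartialOrder S] [MeasurableSpace S] [MeasurableSingletonClass S]
    {Ω : Type*} [MeasurableSpace Ω]
    (P : Measure Ω)
    (T : Set S) (hTfin : T.Finite) (hTup : IsUpperSet T)
    (n : ℕ) (hn : 3 ≤ n)
    (X : Fin n → Ω → S)
    (hmeas : ∀ i, Measurable (X i))
    (hindep : iIndepFun X P)
    (hlaw : ∀ i, Measure.map (X i) P = uniformOn T)
    (N : Ω → ℕ)
    (hN : ∀ ω, N ω = Set.ncard {i : Fin n | ∃ j, j ≠ i ∧ X j ω ≤ X i ω})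
    (sizeEst : Ω → ℝ)
    (hsizeEst : ∀ ω, sizeEst ω =
      (n : ℝ) * (Set.ncard {y : S | ∃ i, X i ω ≤ y} : ℝ) / (N ω : ℝ)) :
    ∫ ω, ((N ω : ℝ) ^ 2 / n) * (1 - sizeEst ω / (T.ncard : ℝ)) ^ 2 ∂P
      ≤ 8 / Real.exp 1 + 1 / 2 := by
  obtain ⟨T, rfl⟩ := hTfin.exists_finset_coe
  have hintegrand : ∀ ω, ((N ω : ℝ) ^ 2 / n) * (1 - sizeEst ω / ((T : Set S).ncard : ℝ)) ^ 2
      = UpperSetEstimator.estimatorError T fun i => X i ω := fun ω => by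
    rw [hsizeEst, hN, Set.ncard_coe_finset]; rfl
  simp only [hintegrand]
  rw [UpperSetEstimator.integral_comp_eq_sum_div_card_pow hmeas hindep hlaw, Fintype.card_fin]
  exact div_le_of_le_mul₀ (by positivity) (by positivity)
    (UpperSetEstimator.sum_estimatorError_le hTup hn)

/-- **Size of an up-set, Corollary 2.7.** Let `T` be a finite up-set of a poset `S` and
`X₁,…,Xₙ` (`n ≥ 3`) i.i.d. uniform points of `T`. With
`Nₙ = #{i : Xⱼ ⪯ Xᵢ for some j ≠ i}` and the estimator `|T|̂ = n·|↑{X₁,…,Xₙ}|/Nₙ`,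
one has `E[(Nₙ²/n)(1 − |T|̂/|T|)²] ≤ 8/e + 1/2`. -/
theorem upper_set_size_estimator
    {S : Type*} [PartialOrder S] [MeasurableSpace S] [MeasurableSingletonClass S]
    {Ω : Type*} [MeasurableSpace Ω]
    (P : Measure Ω) [IsProbabilityMeasure P]
    (T : Set S) (hTfin : T.Finite) (hTup : IsUpperSet T)
    (n : ℕ) (hn : 3 ≤ n)
    (X : Fin n → Ω → S)
    (hmeas : ∀ i, Measurable (X i))
    (hindep : iIndepFun X P)
    (hlaw : ∀ i, Measure.map (X i) P = uniformOn T)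
    (N : Ω → ℕ)
    (hN : ∀ ω, N ω = Set.ncard {i : Fin n | ∃ j, j ≠ i ∧ X j ω ≤ X i ω})
    (sizeEst : Ω → ℝ)
    (hsizeEst : ∀ ω, sizeEst ω =
      (n : ℝ) * (Set.ncard {y : S | ∃ i, X i ω ≤ y} : ℝ) / (N ω : ℝ)) :
    ∫ ω, ((N ω : ℝ) ^ 2 / n) * (1 - sizeEst ω / (T.ncard : ℝ)) ^ 2 ∂P
      ≤ 8 / Real.exp 1 + 1 / 2 :=
  upper_set_size_estimator_general P T hTfin hTup n hn X hmeas hindep hlaw N hN sizeEst hsizeEst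

end
end

section
/- Let (X₁, Y₁) be a random pair in ℝ^p × ℝ such that Y₁ and the components of X₁ have sub-Gaussian tails and (X₁,Y₁) has a bounded probability density with respect to Lebesgue measure on ℝ^p × ℝ. Then there exist finite positive constants C₁, C₂ depending only on p and the law of (X₁,Y₁) such that: for every α > 1 and every unit vector z ∈ ℝ^p, E(e^{−α (X₁ᵀz)²}) ≤ C₁ e^{−C₂ log α}; and for every α > 1 and every b ∈ ℝ^p, E(e^{−α (Y₁ − X₁ᵀb)²}) ≤ C₁ e^{−C₂ log α}. -/
/-!
Write `E e^{-αW²} ≤ P(|W| ≤ t) + e^{-αt²}`. On the box `‖(X₁, Y₁)‖ ≤ R` the bounded density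
bounds `P(|W| ≤ t)` by the Lebesgue volume of a slab of width `2t` across the box, measured along a
coordinate whose coefficient in `W` is bounded away from `0` (the `Y₁`-coordinate for
`Y₁ - X₁ᵀb`, a coordinate with `|z_j| ≥ 1/p` for `X₁ᵀz`); this volume is `O(t R^p)`. Outside the
box the sub-Gaussian tails contribute `O(e^{-cR²})`. With `α = β^{4(p+1)}`, `R = β` and
`t = β^{-(p+1)}`, all three terms are `O(1/β) = O(α^{-1/(4(p+1))})`.
-/

open MeasureTheory ProbabilityTheory

noncomputable section

def HasSubGaussianTail {Ω : Type*} [MeasurableSpace Ω] (P : Measure Ω) (Z : Ω → ℝ) : Prop :=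
  ∃ c > 0, ∫⁻ ω, ENNReal.ofReal (Real.exp (c * Z ω ^ 2)) ∂P < ⊤

open Real Set

lemma exp_neg_le_inv_of_le {u v : ℝ} (hv : 0 < v) (hvu : v ≤ u) : exp (-u) ≤ v⁻¹ :=
  calc exp (-u) ≤ exp (-v) := exp_le_exp.2 (neg_le_neg hvu)
    _ ≤ v⁻¹ := by rw [exp_neg]; exact inv_anti₀ hv (by linarith [add_one_le_exp v])

lemma volume_abs_mul_add_le (a b t : ℝ) (ha : a ≠ 0) :
    volume {s : ℝ | |a * s + b| ≤ t} = ENNReal.ofReal (2 * t / |a|) := by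
  have hpre : {s : ℝ | |a * s + b| ≤ t} = (a * ·) ⁻¹' ((· + b) ⁻¹' Icc (-t) t) := by
    ext s; simp only [mem_ofPred_eq, mem_preimage, mem_Icc, abs_le]
  rw [hpre, Real.volume_preimage_mul_left ha, measure_preimage_add_right, Real.volume_Icc,
    ← ENNReal.ofReal_mul (abs_nonneg _), abs_inv]
  congr 1
  ring

lemma measure_prod_abs_mul_add_le {α : Type*} [MeasurableSpace α] (μ : Measure α)
    {A : Set α} (hA : MeasurableSet A) {c : α → ℝ} (hc : Measurable c) {a : ℝ} (ha : a ≠ 0)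
    (t : ℝ) :
    μ.prod volume {q | q.1 ∈ A ∧ |a * q.2 + c q.1| ≤ t} ≤ μ A * ENNReal.ofReal (2 * t / |a|) := by
  have hS : MeasurableSet {q : α × ℝ | q.1 ∈ A ∧ |a * q.2 + c q.1| ≤ t} :=
    (hA.preimage measurable_fst).inter
      (measurableSet_le (f := fun q : α × ℝ => |a * q.2 + c q.1|) (by fun_prop) measurable_const)
  have hfibre : ∀ x, volume (Prod.mk x ⁻¹' {q : α × ℝ | q.1 ∈ A ∧ |a * q.2 + c q.1| ≤ t})
      ≤ A.indicator (fun _ => ENNReal.ofReal (2 * t / |a|)) x := by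
    intro x
    by_cases hx : x ∈ A
    · simp [hx, preimage, volume_abs_mul_add_le a (c x) t ha]
    · simp [hx, preimage]
  calc μ.prod volume {q | q.1 ∈ A ∧ |a * q.2 + c q.1| ≤ t}
      ≤ ∫⁻ x, A.indicator (fun _ => ENNReal.ofReal (2 * t / |a|)) x ∂μ := by
        rw [Measure.prod_apply hS]; exact lintegral_mono hfibre
    _ = μ A * ENNReal.ofReal (2 * t / |a|) := by
        rw [lintegral_indicator_const hA, mul_comm]

lemma volume_abs_sub_le_norm_le {ι : Type*} [Fintype ι] {g : (ι → ℝ) → ℝ} (hg : Measurable g)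
    {R : ℝ} (hR : 0 ≤ R) (t : ℝ) :
    volume {q : (ι → ℝ) × ℝ | |q.2 - g q.1| ≤ t ∧ ‖q‖ ≤ R}
      ≤ ENNReal.ofReal (2 * t * (2 * R) ^ Fintype.card ι) := by
  calc volume {q : (ι → ℝ) × ℝ | |q.2 - g q.1| ≤ t ∧ ‖q‖ ≤ R}
      ≤ volume {q : (ι → ℝ) × ℝ | q.1 ∈ Metric.closedBall 0 R ∧ |1 * q.2 + -g q.1| ≤ t} := by
        refine measure_mono fun q ⟨hqt, hqR⟩ => ⟨?_, ?_⟩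
        · simpa using (norm_prod_le_iff.1 hqR).1
        · simpa [← sub_eq_add_neg] using hqt
    _ ≤ volume (Metric.closedBall (0 : ι → ℝ) R) * ENNReal.ofReal (2 * t / |1|) := by
        rw [Measure.volume_eq_prod]
        exact measure_prod_abs_mul_add_le _ Metric.isClosed_closedBall.measurableSet hg.neg
          one_ne_zero t
    _ = ENNReal.ofReal (2 * t * (2 * R) ^ Fintype.card ι) := by
        rw [Real.volume_pi_closedBall _ hR, abs_one, div_one, ← ENNReal.ofReal_mul (by positivity),
          mul_comm]

lemma volume_pi_abs_sum_mul_le {n : ℕ} {z : Fin (n + 1) → ℝ} {i : Fin (n + 1)} (hz : z i ≠ 0)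
    {R : ℝ} (hR : 0 ≤ R) (t : ℝ) :
    volume {x : Fin (n + 1) → ℝ | ‖x‖ ≤ R ∧ |∑ j, x j * z j| ≤ t}
      ≤ ENNReal.ofReal ((2 * R) ^ n) * ENNReal.ofReal (2 * t / |z i|) := by
  set S : Set ((Fin n → ℝ) × ℝ) := {q | q.1 ∈ Metric.closedBall 0 R ∧
    |z i * q.2 + ∑ k, q.1 k * z (i.succAbove k)| ≤ t}
  have hc : Measurable fun y : Fin n → ℝ => ∑ k, y k * z (i.succAbove k) := by fun_prop
  have hS : MeasurableSet S :=
    (Metric.isClosed_closedBall.measurableSet.preimage measurable_fst).inter <| measurableSet_le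
      (f := fun q : (Fin n → ℝ) × ℝ => |z i * q.2 + ∑ k, q.1 k * z (i.succAbove k)|)
      (by fun_prop) measurable_const
  have hf := (Measure.measurePreserving_swap (μ := (volume : Measure ℝ))
    (ν := (volume : Measure (Fin n → ℝ)))).comp (volume_preserving_piFinSuccAbove (fun _ => ℝ) i)
  calc volume {x : Fin (n + 1) → ℝ | ‖x‖ ≤ R ∧ |∑ j, x j * z j| ≤ t}
      ≤ volume ((Prod.swap ∘ MeasurableEquiv.piFinSuccAbove (fun _ => ℝ) i) ⁻¹' S) := by
        refine measure_mono fun x ⟨hxR, hxt⟩ => ⟨?_, ?_⟩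
        · show i.removeNth x ∈ Metric.closedBall 0 R
          rw [mem_closedBall_zero_iff, pi_norm_le_iff_of_nonneg hR]
          exact fun k => (norm_le_pi_norm x _).trans hxR
        · show |z i * x i + ∑ k, x (i.succAbove k) * z (i.succAbove k)| ≤ t
          rwa [mul_comm, ← Fin.sum_univ_succAbove (fun j => x j * z j) i]
    _ = volume.prod volume S := hf.measure_preimage hS.nullMeasurableSet
    _ ≤ volume (Metric.closedBall (0 : Fin n → ℝ) R) * ENNReal.ofReal (2 * t / |z i|) :=
        measure_prod_abs_mul_add_le _ Metric.isClosed_closedBall.measurableSet hc hz t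
    _ = ENNReal.ofReal ((2 * R) ^ n) * ENNReal.ofReal (2 * t / |z i|) := by
        rw [Real.volume_pi_closedBall _ hR, Fintype.card_fin]

lemma exists_one_le_card_mul_abs {ι : Type*} [Fintype ι] {z : ι → ℝ} (hz : ∑ i, z i ^ 2 = 1) :
    ∃ i, 1 ≤ Fintype.card ι * |z i| := by
  have hne : (Finset.univ : Finset ι).Nonempty := by
    by_contra h
    simp [Finset.not_nonempty_iff_eq_empty.1 h] at hz
  have hsq_le_abs : ∀ i, z i ^ 2 ≤ |z i| := fun i => by
    have : z i ^ 2 ≤ 1 := hz ▸ Finset.single_le_sum (fun j _ => sq_nonneg (z j)) (Finset.mem_univ i)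
    nlinarith [abs_nonneg (z i), sq_abs (z i)]
  have hsum : 1 ≤ ∑ i, |z i| := hz ▸ Finset.sum_le_sum fun i _ => hsq_le_abs i
  obtain ⟨i, -, hi⟩ := Finset.exists_le_of_sum_le hne (f := fun _ => (1 : ℝ))
    (g := fun i => Fintype.card ι * |z i|) (by
      simpa [← Finset.mul_sum] using mul_le_mul_of_nonneg_left hsum (Nat.cast_nonneg _))
  exact ⟨i, hi⟩

lemma volume_abs_sum_mul_le_norm_le {p : ℕ} {z : Fin p → ℝ} (hz : ∑ j, z j ^ 2 = 1) {R : ℝ}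
    (hR : 0 ≤ R) {t : ℝ} (ht : 0 ≤ t) :
    volume {q : (Fin p → ℝ) × ℝ | |∑ j, q.1 j * z j| ≤ t ∧ ‖q‖ ≤ R}
      ≤ ENNReal.ofReal (2 * t * p * (2 * R) ^ p) := by
  obtain ⟨i, hi⟩ := exists_one_le_card_mul_abs hz
  rw [Fintype.card_fin] at hi
  obtain ⟨n, rfl⟩ : ∃ n, p = n + 1 := Nat.exists_eq_succ_of_ne_zero (by rintro rfl; exact i.elim0)
  have hzi : 0 < |z i| := abs_pos.2 fun h => by rw [h, abs_zero, mul_zero] at hi; linarith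
  calc volume {q : (Fin (n + 1) → ℝ) × ℝ | |∑ j, q.1 j * z j| ≤ t ∧ ‖q‖ ≤ R}
      ≤ volume ({x : Fin (n + 1) → ℝ | ‖x‖ ≤ R ∧ |∑ j, x j * z j| ≤ t} ×ˢ
          Metric.closedBall (0 : ℝ) R) := by
        refine measure_mono fun q ⟨hqt, hqR⟩ => ?_
        have := norm_prod_le_iff.1 hqR
        exact ⟨⟨this.1, hqt⟩, mem_closedBall_zero_iff.2 this.2⟩
    _ ≤ ENNReal.ofReal ((2 * R) ^ n) * ENNReal.ofReal (2 * t / |z i|) * ENNReal.ofReal (2 * R) := by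
        rw [Measure.volume_eq_prod, Measure.prod_prod, Real.volume_closedBall]
        gcongr
        exact volume_pi_abs_sum_mul_le (abs_pos.1 hzi) hR t
    _ ≤ ENNReal.ofReal (2 * t * ↑(n + 1) * (2 * R) ^ (n + 1)) := by
        rw [← ENNReal.ofReal_mul (by positivity), ← ENNReal.ofReal_mul (by positivity)]
        refine ENNReal.ofReal_le_ofReal ?_
        have : 2 * t / |z i| ≤ 2 * t * ↑(n + 1) := by
          rw [div_le_iff₀ hzi]; nlinarith
        calc (2 * R) ^ n * (2 * t / |z i|) * (2 * R) = 2 * t / |z i| * (2 * R) ^ (n + 1) := by ring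
          _ ≤ 2 * t * ↑(n + 1) * (2 * R) ^ (n + 1) := by gcongr

section Probability

variable {Ω : Type*} [MeasurableSpace Ω] {P : Measure Ω}

lemma measureReal_preimage_le_of_map_le_smul {E : Type*} [MeasurableSpace E] {V : Ω → E}
    (hV : AEMeasurable V P) {ν : Measure E} {C : ENNReal} (hC : C ≠ ⊤) (hmap : P.map V ≤ C • ν)
    {s : Set E} {L : ℝ} (hL : 0 ≤ L) (hs : ν s ≤ ENNReal.ofReal L) :
    P.real (V ⁻¹' s) ≤ C.toReal * L := by
  refine ENNReal.toReal_le_of_le_ofReal (by positivity) ?_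
  calc P (V ⁻¹' s) ≤ P.map V s := Measure.le_map_apply hV s
    _ ≤ C * ν s := hmap s
    _ ≤ C * ENNReal.ofReal L := by gcongr
    _ = ENNReal.ofReal (C.toReal * L) := by
        rw [ENNReal.ofReal_mul ENNReal.toReal_nonneg, ENNReal.ofReal_toReal hC]

lemma HasSubGaussianTail.exists_measureReal_lt_abs_le [IsFiniteMeasure P] {Z : Ω → ℝ}
    (hZ : HasSubGaussianTail P Z) (hm : AEMeasurable Z P) :
    ∃ c > 0, ∃ M ≥ 0, ∀ R, 0 ≤ R → P.real {ω | R < |Z ω|} ≤ M * exp (-(c * R ^ 2)) := by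
  obtain ⟨c, hc, hfin⟩ := hZ
  have hint : Integrable (fun ω => exp (c * Z ω ^ 2)) P := by
    simpa [ENNReal.toReal_ofReal (exp_nonneg _)] using
      integrable_toReal_of_lintegral_ne_top (by fun_prop) hfin.ne
  refine ⟨c, hc, ∫ ω, exp (c * Z ω ^ 2) ∂P, integral_nonneg fun _ => (exp_pos _).le,
    fun R hR => ?_⟩
  have hmarkov := mul_meas_ge_le_integral_of_nonneg (ae_of_all _ fun _ => (exp_pos _).le) hint
    (exp (c * R ^ 2))
  have hsub : {ω | R < |Z ω|} ⊆ {ω | exp (c * R ^ 2) ≤ exp (c * Z ω ^ 2)} := fun ω hω => by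
    have : R ^ 2 ≤ Z ω ^ 2 := by rw [← sq_abs (Z ω)]; exact pow_le_pow_left₀ hR (le_of_lt hω) 2
    exact exp_le_exp.2 (by gcongr)
  calc P.real {ω | R < |Z ω|}
      ≤ exp (-(c * R ^ 2)) *
          (exp (c * R ^ 2) * P.real {ω | exp (c * R ^ 2) ≤ exp (c * Z ω ^ 2)}) := by
        rw [← mul_assoc, ← exp_add, neg_add_cancel, exp_zero, one_mul]
        exact measureReal_mono hsub
    _ ≤ (∫ ω, exp (c * Z ω ^ 2) ∂P) * exp (-(c * R ^ 2)) := by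
        rw [mul_comm]; gcongr

lemma exists_forall_measureReal_lt_abs_le [IsFiniteMeasure P] {ι : Type*} [Finite ι]
    {Z : ι → Ω → ℝ} (hm : ∀ i, AEMeasurable (Z i) P) (hZ : ∀ i, HasSubGaussianTail P (Z i)) :
    ∃ c > 0, ∃ M ≥ 0, ∀ i R, 0 ≤ R → P.real {ω | R < |Z i ω|} ≤ M * exp (-(c * R ^ 2)) := by
  choose c hc M hM hbound using fun i => (hZ i).exists_measureReal_lt_abs_le (hm i)
  cases isEmpty_or_nonempty ι
  · exact ⟨1, one_pos, 0, le_rfl, fun i => isEmptyElim i⟩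
  obtain ⟨i₀, hi₀⟩ := Finite.exists_min c
  obtain ⟨i₁, hi₁⟩ := Finite.exists_max M
  refine ⟨c i₀, hc i₀, M i₁, hM i₁, fun i R hR => (hbound i R hR).trans ?_⟩
  gcongr
  exacts [hM i₁, hi₁ i, hi₀ i]

lemma measureReal_lt_norm_prod_le [IsFiniteMeasure P] {ι : Type*} [Fintype ι] (X : Ω → ι → ℝ)
    (Y : Ω → ℝ) {R : ℝ} (hR : 0 ≤ R) :
    P.real {ω | R < ‖(X ω, Y ω)‖} ≤ ∑ j, P.real {ω | R < |X ω j|} + P.real {ω | R < |Y ω|} := by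
  have hsub : {ω | R < ‖(X ω, Y ω)‖} ⊆ (⋃ j, {ω | R < |X ω j|}) ∪ {ω | R < |Y ω|} := by
    intro ω hω
    by_contra h
    simp only [mem_union, mem_iUnion, mem_ofPred_eq, not_or, not_exists, not_lt] at h
    refine hω.not_ge (norm_prod_le_iff.2 ⟨(pi_norm_le_iff_of_nonneg hR).2 h.1, h.2⟩)
  calc P.real {ω | R < ‖(X ω, Y ω)‖}
      ≤ P.real ((⋃ j, {ω | R < |X ω j|}) ∪ {ω | R < |Y ω|}) := measureReal_mono hsub
    _ ≤ P.real (⋃ j, {ω | R < |X ω j|}) + P.real {ω | R < |Y ω|} := measureReal_union_le _ _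
    _ ≤ ∑ j, P.real {ω | R < |X ω j|} + P.real {ω | R < |Y ω|} := by
        gcongr; exact measureReal_iUnion_fintype_le _

lemma exists_measureReal_lt_norm_prod_le [IsFiniteMeasure P] {ι : Type*} [Fintype ι]
    {X : Ω → ι → ℝ} {Y : Ω → ℝ} (hX : Measurable X) (hY : Measurable Y)
    (hsubX : ∀ j, HasSubGaussianTail P (fun ω => X ω j)) (hsubY : HasSubGaussianTail P Y) :
    ∃ c > 0, ∃ M ≥ 0, ∀ R, 0 < R → P.real {ω | R < ‖(X ω, Y ω)‖} ≤ M * exp (-(c * R ^ 2)) := by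
  obtain ⟨c, hc, M, hM, hZ⟩ := exists_forall_measureReal_lt_abs_le (P := P)
    (Z := fun (i : Option ι) ω => i.elim (Y ω) (X ω))
    (by rintro (_ | j) <;> dsimp only [Option.elim] <;> fun_prop)
    (by rintro (_ | j); exacts [hsubY, hsubX j])
  refine ⟨c, hc, (Fintype.card ι + 1) * M, by positivity, fun R hR => ?_⟩
  calc P.real {ω | R < ‖(X ω, Y ω)‖}
      ≤ ∑ j, P.real {ω | R < |X ω j|} + P.real {ω | R < |Y ω|} :=
        measureReal_lt_norm_prod_le X Y hR.le
    _ ≤ ∑ _j : ι, M * exp (-(c * R ^ 2)) + M * exp (-(c * R ^ 2)) := by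
        gcongr with j
        exacts [hZ (some j) R hR.le, hZ none R hR.le]
    _ = (Fintype.card ι + 1) * M * exp (-(c * R ^ 2)) := by
        rw [Finset.sum_const, Finset.card_univ, nsmul_eq_mul]
        ring

lemma integral_exp_neg_mul_sq_le [IsProbabilityMeasure P] {W : Ω → ℝ} (hW : Measurable W)
    {α t : ℝ} (hα : 0 ≤ α) (ht : 0 ≤ t) :
    ∫ ω, exp (-α * W ω ^ 2) ∂P ≤ P.real {ω | |W ω| ≤ t} + exp (-(α * t ^ 2)) := by
  have hs : MeasurableSet {ω | |W ω| ≤ t} := measurableSet_le hW.abs measurable_const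
  have hpt : ∀ ω, exp (-α * W ω ^ 2) ≤ {ω | |W ω| ≤ t}.indicator 1 ω + exp (-(α * t ^ 2)) := by
    intro ω
    by_cases hω : |W ω| ≤ t
    · rw [indicator_of_mem (s := {ω | |W ω| ≤ t}) hω, Pi.one_apply]
      have : exp (-α * W ω ^ 2) ≤ 1 := exp_le_one_iff.2 (by nlinarith [sq_nonneg (W ω)])
      linarith [exp_pos (-(α * t ^ 2))]
    · rw [indicator_of_notMem (s := {ω | |W ω| ≤ t}) hω, zero_add, exp_le_exp, neg_mul,
        neg_le_neg_iff]
      have : t ^ 2 ≤ W ω ^ 2 := by rw [← sq_abs (W ω)]; exact pow_le_pow_left₀ ht (by linarith) 2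
      exact mul_le_mul_of_nonneg_left this hα
  calc ∫ ω, exp (-α * W ω ^ 2) ∂P
      ≤ ∫ ω, ({ω | |W ω| ≤ t}.indicator 1 ω + exp (-(α * t ^ 2))) ∂P :=
        integral_mono_of_nonneg (ae_of_all _ fun _ => (exp_pos _).le)
          (((integrable_const 1).indicator hs).add (integrable_const _)) (ae_of_all _ hpt)
    _ = P.real {ω | |W ω| ≤ t} + exp (-(α * t ^ 2)) := by
        rw [integral_add ((integrable_const 1).indicator hs) (integrable_const _),
          integral_indicator_one hs, integral_const, probReal_univ, one_smul]

lemma integral_exp_neg_mul_sq_le_of_small_ball [IsProbabilityMeasure P] {W N : Ω → ℝ}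
    (hW : Measurable W) {n : ℕ} {K M c : ℝ} (hM : 0 ≤ M) (hc : 0 < c)
    (hball : ∀ t R, 0 < t → 0 < R → P.real {ω | |W ω| ≤ t ∧ N ω ≤ R} ≤ K * t * R ^ n)
    (htail : ∀ R, 0 < R → P.real {ω | R < N ω} ≤ M * exp (-(c * R ^ 2))) {α : ℝ} (hα : 1 < α) :
    ∫ ω, exp (-α * W ω ^ 2) ∂P ≤ (K + M / c + 1) * exp (-(4 * (n + 1) : ℝ)⁻¹ * log α) := by
  set β := α ^ ((4 * (n + 1) : ℝ)⁻¹) with hβ_def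
  have hβ : 1 < β := one_lt_rpow hα (by positivity)
  have hαβ : α = β ^ (4 * (n + 1)) := by
    have := rpow_inv_natCast_pow (x := α) (n := 4 * (n + 1)) (by linarith) (by positivity)
    push_cast at this
    exact this.symm
  have hexp : exp (-(4 * (n + 1) : ℝ)⁻¹ * log α) = β⁻¹ := by
    rw [hβ_def, rpow_def_of_pos (by linarith), ← exp_neg]
    ring_nf
  set t := (β ^ (n + 1))⁻¹
  have ht : 0 < t := by positivity
  have hball_term : t * β ^ n = β⁻¹ := by
    simp only [t, pow_succ]
    field_simp
  have htail_term : exp (-(c * β ^ 2)) ≤ (c * β)⁻¹ :=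
    exp_neg_le_inv_of_le (by positivity)
      (mul_le_mul_of_nonneg_left (le_self_pow₀ hβ.le two_ne_zero) hc.le)
  have hgauss_term : exp (-(α * t ^ 2)) ≤ β⁻¹ := by
    refine exp_neg_le_inv_of_le (by positivity) ?_
    rw [show α * t ^ 2 = β ^ (2 * (n + 1)) by simp only [hαβ, t]; field_simp; ring]
    exact le_self_pow₀ hβ.le (by omega)
  have hsplit : P.real {ω | |W ω| ≤ t}
      ≤ P.real {ω | |W ω| ≤ t ∧ N ω ≤ β} + P.real {ω | β < N ω} := by
    refine (measureReal_mono fun ω hω => ?_).trans (measureReal_union_le _ _)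
    by_cases hN : N ω ≤ β
    exacts [Or.inl ⟨hω, hN⟩, Or.inr (not_le.1 hN)]
  calc ∫ ω, exp (-α * W ω ^ 2) ∂P ≤ P.real {ω | |W ω| ≤ t} + exp (-(α * t ^ 2)) :=
        integral_exp_neg_mul_sq_le hW (by linarith) ht.le
    _ ≤ K * t * β ^ n + M * exp (-(c * β ^ 2)) + exp (-(α * t ^ 2)) := by
        gcongr
        exact hsplit.trans (add_le_add (hball t β ht (by linarith)) (htail β (by linarith)))
    _ ≤ K * β⁻¹ + M * (c * β)⁻¹ + β⁻¹ := by
        rw [mul_assoc, hball_term]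
        gcongr
    _ = (K + M / c + 1) * exp (-(4 * (n + 1) : ℝ)⁻¹ * log α) := by
        rw [hexp, mul_inv]
        ring

end Probability

/-- **Lemma B.2.** Let `(X₁,Y₁)` be a random pair in `ℝ^p × ℝ` with sub-Gaussian components
and a bounded joint density with respect to Lebesgue measure. Then there are constants
`C₁, C₂ > 0`, depending only on `p` and the law of `(X₁,Y₁)`, such that for every `α > 1` and
unit vector `z`, `E(e^{−α(X₁ᵀz)²}) ≤ C₁e^{−C₂ log α}`, and for every `α > 1` and `b ∈ ℝ^p`,
`E(e^{−α(Y₁ − X₁ᵀb)²}) ≤ C₁e^{−C₂ log α}`. -/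
theorem small_ball_exponential_moment
    (p : ℕ) {Ω : Type*} [MeasurableSpace Ω]
    (P : Measure Ω) [IsProbabilityMeasure P]
    (X1 : Ω → Fin p → ℝ) (Y1 : Ω → ℝ)
    (hXmeas : Measurable X1) (hYmeas : Measurable Y1)
    (hsubGX : ∀ j : Fin p, HasSubGaussianTail P (fun ω => X1 ω j))
    (hsubGY : HasSubGaussianTail P Y1)
    (hdens : ∃ C : ENNReal, C ≠ ⊤ ∧
      Measure.map (fun ω => (X1 ω, Y1 ω)) P ≤ C • (volume : Measure ((Fin p → ℝ) × ℝ))) :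
    ∃ C₁ C₂ : ℝ, 0 < C₁ ∧ 0 < C₂ ∧
      (∀ α : ℝ, 1 < α → ∀ z : Fin p → ℝ, ∑ j, z j ^ 2 = 1 →
        ∫ ω, Real.exp (-α * (∑ j, X1 ω j * z j) ^ 2) ∂P
          ≤ C₁ * Real.exp (-C₂ * Real.log α)) ∧
      (∀ α : ℝ, 1 < α → ∀ b : Fin p → ℝ,
        ∫ ω, Real.exp (-α * (Y1 ω - ∑ j, X1 ω j * b j) ^ 2) ∂P
          ≤ C₁ * Real.exp (-C₂ * Real.log α)) := by
  obtain ⟨C, hC, hmap⟩ := hdens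
  obtain ⟨c, hc, M, hM, htail⟩ := exists_measureReal_lt_norm_prod_le hXmeas hYmeas hsubGX hsubGY
  have hball : ∀ {s : ℝ} (S : ℝ → ℝ → Set ((Fin p → ℝ) × ℝ)), 0 ≤ s → s ≤ p + 1 →
      (∀ t R, 0 < t → 0 < R → volume (S t R) ≤ ENNReal.ofReal (2 * t * s * (2 * R) ^ p)) →
      ∀ t R, 0 < t → 0 < R → P.real ((fun ω => (X1 ω, Y1 ω)) ⁻¹' S t R)
        ≤ C.toReal * 2 ^ (p + 1) * (p + 1) * t * R ^ p := by
    intro s S hs hsp hvol t R ht hR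
    calc _ ≤ C.toReal * (2 * t * s * (2 * R) ^ p) :=
          measureReal_preimage_le_of_map_le_smul (by fun_prop) hC hmap (by positivity)
            (hvol t R ht hR)
      _ = C.toReal * 2 ^ (p + 1) * t * R ^ p * s := by ring
      _ ≤ C.toReal * 2 ^ (p + 1) * t * R ^ p * (p + 1) := by gcongr
      _ = C.toReal * 2 ^ (p + 1) * (p + 1) * t * R ^ p := by ring
  refine ⟨C.toReal * 2 ^ (p + 1) * (p + 1) + M / c + 1, (4 * (p + 1) : ℝ)⁻¹,
    by positivity, by positivity, fun α hα z hz => ?_, fun α hα b => ?_⟩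
  · exact integral_exp_neg_mul_sq_le_of_small_ball (by fun_prop) hM hc
      (hball (fun t R => {q | |∑ j, q.1 j * z j| ≤ t ∧ ‖q‖ ≤ R}) (by positivity) (by linarith)
        fun t R ht hR => volume_abs_sum_mul_le_norm_le hz hR.le ht.le) htail hα
  · exact integral_exp_neg_mul_sq_le_of_small_ball (by fun_prop) hM hc
      (hball (s := 1) (fun t R => {q | |q.2 - ∑ j, q.1 j * b j| ≤ t ∧ ‖q‖ ≤ R}) zero_le_one
        (by linarith) fun t R _ hR => by
          simpa using
            volume_abs_sub_le_norm_le (g := fun x => ∑ j, x j * b j) (by fun_prop) hR.le t)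
      htail hα

end
end
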